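/- ∘-bisimilarity is an equivalence relation on pointed models: it is reflexive ((M,s) ≃∘ (M,s)), symmetric (if (M,s) ≃∘ (M',s') then (M',s') ≃∘ (M,s)), and transitive (if (M,s) ≃∘ (N,t) and (N,t) ≃∘ (O,u) then (M,s) ≃∘ (O,u)). -/

import Mathlib

/-- A Kripke model. -/
structure Model (W : Type) where
  R : W → W → Prop
  V : ℕ → W → Prop

/-- Z is a ∘-bisimulation on the model M: Z is nonempty and whenever sZs',
(Inv), (∘-Forth) and (∘-Back) hold. -/
def isCircBisim {W : Type} (M : Model W) (Z : W → W → Prop) : Prop :=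
  (∃ a b, Z a b) ∧
  ∀ s s', Z s s' →
    ((∀ p, M.V p s ↔ M.V p s') ∧
     (∀ t, M.R s t → ¬ Z s t → ∃ t', M.R s' t' ∧ Z t t') ∧
     (∀ t', M.R s' t' → ¬ Z s' t' → ∃ t, M.R s t ∧ Z t t'))

/-- The disjoint union of two models. -/
def dsum {W W' : Type} (M : Model W) (M' : Model W') : Model (W ⊕ W') where
  R x y :=
    match x, y with
    | Sum.inl a, Sum.inl b => M.R a b
    | Sum.inr a, Sum.inr b => M'.R a b
    | _, _ => False
  V p x :=
    match x with
    | Sum.inl a => M.V p a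
    | Sum.inr a => M'.V p a

/-- (M,s) and (M',s') are ∘-bisimilar: some ∘-bisimulation on the disjoint
union of M and M' relates s to s'. -/
def circBisimilar {W W' : Type} (M : Model W) (s : W) (M' : Model W') (s' : W') : Prop :=
  ∃ Z, isCircBisim (dsum M M') Z ∧ Z (Sum.inl s) (Sum.inr s')

/-!
The equivalence closure of a ∘-bisimulation `Z` is again one. The invariant behind this is that
for `s ≈ s'` every successor `t` of `s` is either already related to `s` or related to a
successor of `s'`, and this dichotomy survives symmetric and transitive steps. Bounded morphisms
pull back and push forward ∘-bisimulations, so reflexivity follows by pulling back equality along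
the fold `M ⊕ M → M`, symmetry by pulling back the equivalence closure along the swap of the two
summands (the converse of a ∘-bisimulation need not be one, as the side conditions `¬ Z s t` are
not symmetric), and transitivity by pushing both ∘-bisimulations into `M₁ ⊕ M₂ ⊕ M₃`, closing their
union under equivalence and pulling back to `M₁ ⊕ M₃`.
-/

namespace Model

variable {W U X : Type}

structure IsBoundedMorphism (M : Model W) (N : Model U) (f : W → U) : Prop where
  map_V : ∀ p x, N.V p (f x) ↔ M.V p x
  map_R : ∀ x y, M.R x y → N.R (f x) (f y)
  back : ∀ x u, N.R (f x) u → ∃ y, M.R x y ∧ f y = u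

namespace IsBoundedMorphism

variable {M : Model W} {N : Model U} {O : Model X}

protected theorem id : IsBoundedMorphism M M id :=
  ⟨fun _ _ => Iff.rfl, fun _ _ h => h, fun _ u h => ⟨u, h, rfl⟩⟩

theorem comp {g : U → X} {f : W → U} (hg : IsBoundedMorphism N O g)
    (hf : IsBoundedMorphism M N f) : IsBoundedMorphism M O (g ∘ f) where
  map_V p x := (hg.map_V p (f x)).trans (hf.map_V p x)
  map_R x y h := hg.map_R _ _ (hf.map_R x y h)
  back x u h := by
    obtain ⟨v, hv, rfl⟩ := hg.back (f x) u h
    obtain ⟨y, hy, rfl⟩ := hf.back x v hv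
    exact ⟨y, hy, rfl⟩

theorem inl : IsBoundedMorphism M (dsum M N) Sum.inl where
  map_V _ _ := Iff.rfl
  map_R _ _ h := h
  back := by
    rintro x (y | y) h
    · exact ⟨y, h, rfl⟩
    · exact h.elim

theorem inr : IsBoundedMorphism N (dsum M N) Sum.inr where
  map_V _ _ := Iff.rfl
  map_R _ _ h := h
  back := by
    rintro x (y | y) h
    · exact h.elim
    · exact ⟨y, h, rfl⟩

theorem sumElim {f : W → X} {g : U → X} (hf : IsBoundedMorphism M O f)
    (hg : IsBoundedMorphism N O g) : IsBoundedMorphism (dsum M N) O (Sum.elim f g) where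
  map_V := by
    rintro p (x | x)
    exacts [hf.map_V p x, hg.map_V p x]
  map_R := by
    rintro (x | x) (y | y) h
    exacts [hf.map_R x y h, h.elim, h.elim, hg.map_R x y h]
  back := by
    rintro (x | x) u h
    · obtain ⟨y, hy, rfl⟩ := hf.back x u h
      exact ⟨.inl y, hy, rfl⟩
    · obtain ⟨y, hy, rfl⟩ := hg.back x u h
      exact ⟨.inr y, hy, rfl⟩

end IsBoundedMorphism

end Model

section CircBisim

variable {W U : Type}

def CircBisimAt (M : Model W) (Z : W → W → Prop) (s s' : W) : Prop :=
  (∀ p, M.V p s ↔ M.V p s') ∧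
  (∀ t, M.R s t → ¬ Z s t → ∃ t', M.R s' t' ∧ Z t t') ∧
  (∀ t', M.R s' t' → ¬ Z s' t' → ∃ t, M.R s t ∧ Z t t')

theorem CircBisimAt.mono {M : Model W} {Z Z' : W → W → Prop} {s s' : W}
    (h : CircBisimAt M Z s s') (hle : Z ≤ Z') : CircBisimAt M Z' s s' := by
  obtain ⟨hV, hF, hB⟩ := h
  exact ⟨hV, fun t ht hst => (hF t ht (hst ∘ hle _ _)).imp fun _ => And.imp_right (hle _ _),
    fun t' ht' hst' => (hB t' ht' (hst' ∘ hle _ _)).imp fun _ => And.imp_right (hle _ _)⟩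

def CircBisimClauses (M : Model W) (Z : W → W → Prop) : Prop :=
  ∀ s s', Z s s' → CircBisimAt M Z s s'

theorem circBisimilar_iff {W' : Type} {M : Model W} {M' : Model W'} {s : W} {s' : W'} :
    circBisimilar M s M' s' ↔
      ∃ Z, CircBisimClauses (dsum M M') Z ∧ Z (.inl s) (.inr s') :=
  ⟨fun ⟨Z, ⟨_, hZ⟩, hs⟩ => ⟨Z, hZ, hs⟩, fun ⟨Z, hZ, hs⟩ => ⟨Z, ⟨⟨_, _, hs⟩, hZ⟩, hs⟩⟩

theorem circBisimClauses_eq (M : Model W) : CircBisimClauses M (· = ·) := by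
  rintro s _ rfl
  exact ⟨fun _ => Iff.rfl, fun t h _ => ⟨t, h, rfl⟩, fun t h _ => ⟨t, h, rfl⟩⟩

def ForthOrRelated (M : Model W) (E : W → W → Prop) (s s' : W) : Prop :=
  ∀ t, M.R s t → E s t ∨ ∃ t', M.R s' t' ∧ E t t'

theorem ForthOrRelated.trans {M : Model W} {E : W → W → Prop} (hE : Equivalence E) {a b c : W}
    (hab : E a b) (h₁ : ForthOrRelated M E a b) (h₂ : ForthOrRelated M E b c) :
    ForthOrRelated M E a c := by
  intro t ht
  obtain hat | ⟨u, hu, htu⟩ := h₁ t ht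
  · exact .inl hat
  obtain hbu | ⟨v, hv, huv⟩ := h₂ u hu
  · exact .inl (hE.trans hab (hE.trans hbu (hE.symm htu)))
  · exact .inr ⟨v, hv, hE.trans htu huv⟩

namespace CircBisimClauses

variable {M : Model W} {N : Model U}

open Relation

theorem comap {f : W → U} {Z : U → U → Prop} (hf : M.IsBoundedMorphism N f)
    (hZ : CircBisimClauses N Z) : CircBisimClauses M (fun x y => Z (f x) (f y)) := by
  intro s s' hss
  obtain ⟨hV, hF, hB⟩ := hZ _ _ hss
  refine ⟨fun p => (hf.map_V p s).symm.trans ((hV p).trans (hf.map_V p s')), ?_, ?_⟩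
  · intro t ht hst
    obtain ⟨u, hu, htu⟩ := hF (f t) (hf.map_R s t ht) hst
    obtain ⟨t', ht', rfl⟩ := hf.back s' u hu
    exact ⟨t', ht', htu⟩
  · intro t' ht' hst'
    obtain ⟨u, hu, hut'⟩ := hB (f t') (hf.map_R s' t' ht') hst'
    obtain ⟨t, ht, rfl⟩ := hf.back s u hu
    exact ⟨t, ht, hut'⟩

theorem map {f : W → U} {Z : W → W → Prop} (hf : M.IsBoundedMorphism N f)
    (hZ : CircBisimClauses M Z) : CircBisimClauses N (Relation.Map Z f f) := by
  rintro _ _ ⟨s, s', hss, rfl, rfl⟩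
  obtain ⟨hV, hF, hB⟩ := hZ _ _ hss
  refine ⟨fun p => (hf.map_V p s).trans ((hV p).trans (hf.map_V p s').symm), ?_, ?_⟩
  · intro u hu hsu
    obtain ⟨t, ht, rfl⟩ := hf.back s u hu
    obtain ⟨t', ht', htt'⟩ := hF t ht fun hst => hsu ⟨s, t, hst, rfl, rfl⟩
    exact ⟨f t', hf.map_R s' t' ht', t, t', htt', rfl, rfl⟩
  · intro u' hu' hsu'
    obtain ⟨t', ht', rfl⟩ := hf.back s' u' hu'
    obtain ⟨t, ht, htt'⟩ := hB t' ht' fun hst' => hsu' ⟨s', t', hst', rfl, rfl⟩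
    exact ⟨f t, hf.map_R s t ht, t, t', htt', rfl, rfl⟩

theorem sup {Z₁ Z₂ : W → W → Prop} (h₁ : CircBisimClauses M Z₁) (h₂ : CircBisimClauses M Z₂) :
    CircBisimClauses M (Z₁ ⊔ Z₂) := by
  rintro s s' (h | h)
  exacts [(h₁ s s' h).mono le_sup_left, (h₂ s s' h).mono le_sup_right]

theorem forthOrRelated_eqvGen {Z : W → W → Prop} (hZ : CircBisimClauses M Z) {s s' : W}
    (h : EqvGen Z s s') :
    ForthOrRelated M (EqvGen Z) s s' ∧ ForthOrRelated M (EqvGen Z) s' s := by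
  induction h with
  | rel a b hab =>
    obtain ⟨-, hF, hB⟩ := hZ a b hab
    refine ⟨fun t ht => ?_, fun t ht => ?_⟩
    · by_cases hat : Z a t
      · exact .inl (.rel _ _ hat)
      obtain ⟨t', ht', htt'⟩ := hF t ht hat
      exact .inr ⟨t', ht', .rel _ _ htt'⟩
    · by_cases hbt : Z b t
      · exact .inl (.rel _ _ hbt)
      obtain ⟨t', ht', ht't⟩ := hB t ht hbt
      exact .inr ⟨t', ht', .symm _ _ (.rel _ _ ht't)⟩
  | refl a =>
    have haa : ForthOrRelated M (EqvGen Z) a a := fun t ht => .inr ⟨t, ht, .refl t⟩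
    exact ⟨haa, haa⟩
  | symm a b _ ih => exact ih.symm
  | trans a b c hab hbc ihab ihbc =>
    exact ⟨ihab.1.trans (EqvGen.is_equivalence Z) hab ihbc.1,
      ihbc.2.trans (EqvGen.is_equivalence Z) (.symm _ _ hbc) ihab.2⟩

theorem eqvGen {Z : W → W → Prop} (hZ : CircBisimClauses M Z) :
    CircBisimClauses M (EqvGen Z) := by
  intro s s' hss
  have hV : ∀ p, M.V p s ↔ M.V p s' := by
    induction hss with
    | rel a b hab => exact (hZ a b hab).1
    | refl => exact fun _ => Iff.rfl
    | symm _ _ _ ih => exact fun p => (ih p).symm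
    | trans _ _ _ _ _ ih₁ ih₂ => exact fun p => (ih₁ p).trans (ih₂ p)
  obtain ⟨hF, hB⟩ := forthOrRelated_eqvGen hZ hss
  refine ⟨hV, fun t ht hst => (hF t ht).resolve_left hst, fun t' ht' hst' => ?_⟩
  obtain ⟨t, ht, ht't⟩ := (hB t' ht').resolve_left hst'
  exact ⟨t, ht, .symm _ _ ht't⟩

end CircBisimClauses

end CircBisim

/-- ∘-bisimilarity is an equivalence relation on pointed models:
reflexive, symmetric and transitive. -/
theorem stmt10 :
    (∀ (W : Type) [Nonempty W] (M : Model W) (s : W), circBisimilar M s M s) ∧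
    (∀ (W W' : Type) [Nonempty W] [Nonempty W'] (M : Model W) (M' : Model W')
        (s : W) (s' : W'),
        circBisimilar M s M' s' → circBisimilar M' s' M s) ∧
    (∀ (W₁ W₂ W₃ : Type) [Nonempty W₁] [Nonempty W₂] [Nonempty W₃]
        (M₁ : Model W₁) (M₂ : Model W₂) (M₃ : Model W₃)
        (s₁ : W₁) (s₂ : W₂) (s₃ : W₃),
        circBisimilar M₁ s₁ M₂ s₂ → circBisimilar M₂ s₂ M₃ s₃ →
        circBisimilar M₁ s₁ M₃ s₃) := by
  refine ⟨fun W _ M s => ?_, fun W W' _ _ M M' s s' h => ?_,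
    fun W₁ W₂ W₃ _ _ _ M₁ M₂ M₃ s₁ s₂ s₃ h₁₂ h₂₃ => ?_⟩
  · have fold : (dsum M M).IsBoundedMorphism M (Sum.elim id id) := .sumElim .id .id
    exact circBisimilar_iff.2 ⟨_, (circBisimClauses_eq M).comap fold, rfl⟩
  · obtain ⟨Z, hZ, hss'⟩ := circBisimilar_iff.1 h
    have swap : (dsum M' M).IsBoundedMorphism (dsum M M') (Sum.elim Sum.inr Sum.inl) :=
      .sumElim .inr .inl
    exact circBisimilar_iff.2 ⟨_, hZ.eqvGen.comap swap, .symm _ _ (.rel _ _ hss')⟩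
  · obtain ⟨Z₁₂, hZ₁₂, hs₁₂⟩ := circBisimilar_iff.1 h₁₂
    obtain ⟨Z₂₃, hZ₂₃, hs₂₃⟩ := circBisimilar_iff.1 h₂₃
    let T := dsum (dsum M₁ M₂) M₃
    have e₁₂ : (dsum M₁ M₂).IsBoundedMorphism T Sum.inl := .inl
    have e₂₃ : (dsum M₂ M₃).IsBoundedMorphism T (Sum.elim (Sum.inl ∘ Sum.inr) Sum.inr) :=
      .sumElim (.comp .inl .inr) .inr
    have e₁₃ : (dsum M₁ M₃).IsBoundedMorphism T (Sum.elim (Sum.inl ∘ Sum.inl) Sum.inr) :=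
      .sumElim (.comp .inl .inl) .inr
    have hZ := ((hZ₁₂.map e₁₂).sup (hZ₂₃.map e₂₃)).eqvGen.comap e₁₃
    exact circBisimilar_iff.2 ⟨_, hZ, .trans _ _ _ (.rel _ _ (.inl ⟨_, _, hs₁₂, rfl, rfl⟩))
      (.rel _ _ (.inr ⟨_, _, hs₂₃, rfl, rfl⟩))⟩
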